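/- Let Ω ⊆ ℝ^4 be open and let u, v, w : Ω → ℝ be smooth. On Ω × (ℝ \ {0}) (with coordinates x^1, x^2, x^3, x^4, λ) define the vector fields Y₁ = λ∂₁ − u₁∂₃ − v₁∂₄ + λw₁∂_λ and Y₂ = λ∂₂ − u₂∂₃ − v₂∂₄ + λw₂∂_λ. Then the bracket [Y₁, Y₂](x, λ) lies in the linear span of {Y₁(x, λ), Y₂(x, λ)} for every x ∈ Ω and every λ ≠ 0 if and only if R₁(u) = u₁w₂ − u₂w₁, R₁(v) = v₁w₂ − v₂w₁ and R₁(w) = 0 hold on Ω, where R₁ = u₁∂₂∂₃ + v₁∂₂∂₄ − u₂∂₁∂₃ − v₂∂₁∂₄. -/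

import Mathlib

/-- The `i`-th standard coordinate (basis) vector of `ℝᵐ`. -/
noncomputable def e (m : ℕ) (i : Fin m) : Fin m → ℝ := Pi.single i 1

/-- Partial derivative `∂f/∂xⁱ` of a scalar function on `ℝᵐ`. -/
noncomputable def pd (m : ℕ) (f : (Fin m → ℝ) → ℝ) (i : Fin m) (x : Fin m → ℝ) : ℝ :=
  fderiv ℝ f x (e m i)

/-- Second partial derivative `∂²f/∂xⁱ∂xʲ`. -/
noncomputable def pd2 (m : ℕ) (f : (Fin m → ℝ) → ℝ) (i j : Fin m) (x : Fin m → ℝ) : ℝ :=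
  pd m (fun y => pd m f i y) j x

/-- Lie bracket of vector fields on (an open subset of) `ℝᵐ`:
`[X,Y](x) = DY(x)·X(x) − DX(x)·Y(x)`. -/
noncomputable def vbr (m : ℕ) (X Y : (Fin m → ℝ) → (Fin m → ℝ)) (x : Fin m → ℝ) :
    Fin m → ℝ :=
  fderiv ℝ Y x (X x) - fderiv ℝ X x (Y x)

/-- Projection from `ℝ⁵ = Ω × (ℝ∖{0})` (coordinates `x¹,…,x⁴,λ`) to `ℝ⁴`. -/
noncomputable def proj45 (z : Fin 5 → ℝ) : Fin 4 → ℝ := fun i => z i.castSucc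

/-- `Y₁ = λ∂₁ − u₁∂₃ − v₁∂₄ + λw₁∂_λ` (coordinates `x¹,…,x⁴` indexed by
`0,…,3`, `λ` by `4`). -/
noncomputable def YF1 (u v w : (Fin 4 → ℝ) → ℝ) (z : Fin 5 → ℝ) : Fin 5 → ℝ :=
  z 4 • e 5 0 - pd 4 u 0 (proj45 z) • e 5 2 - pd 4 v 0 (proj45 z) • e 5 3
  + (z 4 * pd 4 w 0 (proj45 z)) • e 5 4

/-- `Y₂ = λ∂₂ − u₂∂₃ − v₂∂₄ + λw₂∂_λ`. -/
noncomputable def YF2 (u v w : (Fin 4 → ℝ) → ℝ) (z : Fin 5 → ℝ) : Fin 5 → ℝ :=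
  z 4 • e 5 1 - pd 4 u 1 (proj45 z) • e 5 2 - pd 4 v 1 (proj45 z) • e 5 3
  + (z 4 * pd 4 w 1 (proj45 z)) • e 5 4

/-- The operator `R₁ = u₁∂₂∂₃ + v₁∂₂∂₄ − u₂∂₁∂₃ − v₂∂₁∂₄`. -/
noncomputable def R1op (u v f : (Fin 4 → ℝ) → ℝ) (x : Fin 4 → ℝ) : ℝ :=
  pd 4 u 0 x * pd2 4 f 1 2 x + pd 4 v 0 x * pd2 4 f 1 3 x
  - pd 4 u 1 x * pd2 4 f 0 2 x - pd 4 v 1 x * pd2 4 f 0 3 x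


/-! The bracket is computed in closed form:
`[Y₁,Y₂] = −w₂ Y₁ + w₁ Y₂ + (R₁u − (u₁w₂ − u₂w₁)) ∂₃ + (R₁v − (v₁w₂ − v₂w₁)) ∂₄ − λ R₁w ∂_λ`,
the `∂₁∂₂`-terms cancelling by symmetry of second derivatives. The remainder has no `∂₁`, `∂₂`
components, while `Y₁`, `Y₂` have `∂₁`, `∂₂` components `(λ, 0)`, `(0, λ)`; so for `λ ≠ 0` the
remainder lies in `span {Y₁, Y₂}` only if it vanishes. -/

section PartialDerivatives

variable {m : ℕ} {f : (Fin m → ℝ) → ℝ} {x : Fin m → ℝ}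

theorem differentiableAt_pd (hf : ContDiffAt ℝ 2 f x) (i : Fin m) :
    DifferentiableAt ℝ (pd m f i) x :=
  ((hf.fderiv_right (m := 1) le_rfl).differentiableAt one_ne_zero).clm_apply
    (differentiableAt_const _)

theorem fderiv_pd_apply_e (i j : Fin m) :
    fderiv ℝ (pd m f i) x (e m j) = pd2 m f i j x :=
  rfl

theorem pd2_eq_fderiv_fderiv (hf : DifferentiableAt ℝ (fderiv ℝ f) x) (i j : Fin m) :
    pd2 m f i j x = fderiv ℝ (fderiv ℝ f) x (e m j) (e m i) := by
  have h : HasFDerivAt (fun y => fderiv ℝ f y (e m i))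
      ((ContinuousLinearMap.apply ℝ ℝ (e m i)).comp (fderiv ℝ (fderiv ℝ f) x)) x :=
    (ContinuousLinearMap.apply ℝ ℝ (e m i)).hasFDerivAt.comp x hf.hasFDerivAt
  exact congrArg (· (e m j)) h.fderiv

theorem pd2_comm (hf : ContDiffAt ℝ 2 f x) (i j : Fin m) : pd2 m f i j x = pd2 m f j i x := by
  have hdf : DifferentiableAt ℝ (fderiv ℝ f) x :=
    (hf.fderiv_right (m := 1) le_rfl).differentiableAt one_ne_zero
  rw [pd2_eq_fderiv_fderiv hdf, pd2_eq_fderiv_fderiv hdf,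
    hf.isSymmSndFDerivAt (by simp [minSmoothness_of_isRCLikeNormedField])]

end PartialDerivatives

theorem eq_zero_of_mem_span_pair {ι K : Type*} [Field K] {p q r : ι → K} {i j : ι}
    (hpi : p i ≠ 0) (hpj : p j = 0) (hqi : q i = 0) (hqj : q j ≠ 0)
    (hr : r ∈ Submodule.span K {p, q}) (hri : r i = 0) (hrj : r j = 0) : r = 0 := by
  obtain ⟨a, b, rfl⟩ := Submodule.mem_span_pair.mp hr
  have ha : a = 0 := by simpa [hpi, hqi] using hri
  have hb : b = 0 := by simpa [hpj, hqj] using hrj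
  simp [ha, hb]

noncomputable def proj45CLM : (Fin 5 → ℝ) →L[ℝ] (Fin 4 → ℝ) :=
  ContinuousLinearMap.pi fun i : Fin 4 => ContinuousLinearMap.proj i.castSucc

theorem proj45CLM_apply (z : Fin 5 → ℝ) : proj45CLM z = proj45 z := rfl

theorem proj45_snoc (x : Fin 4 → ℝ) (c : ℝ) : proj45 (Fin.snoc x c) = x := by
  funext i
  simp [proj45]

section LaxPair

variable {u v w : (Fin 4 → ℝ) → ℝ} {z : Fin 5 → ℝ}

noncomputable def laxField (u v w : (Fin 4 → ℝ) → ℝ) (i : Fin 4) (z : Fin 5 → ℝ) : Fin 5 → ℝ :=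
  z 4 • e 5 i.castSucc - pd 4 u i (proj45 z) • e 5 2 - pd 4 v i (proj45 z) • e 5 3
  + (z 4 * pd 4 w i (proj45 z)) • e 5 4

theorem YF1_eq_laxField : YF1 u v w = laxField u v w 0 := rfl

theorem YF2_eq_laxField : YF2 u v w = laxField u v w 1 := rfl

theorem proj45_laxField (i : Fin 4) (z : Fin 5 → ℝ) :
    proj45 (laxField u v w i z) =
      z 4 • e 4 i - pd 4 u i (proj45 z) • e 4 2 - pd 4 v i (proj45 z) • e 4 3 := by
  funext k
  fin_cases k <;> fin_cases i <;> simp [proj45, laxField, e]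

theorem laxField_apply_four (i : Fin 4) (z : Fin 5 → ℝ) :
    laxField u v w i z 4 = z 4 * pd 4 w i (proj45 z) := by
  fin_cases i <;> simp [laxField, e]

theorem fderiv_laxField_apply {i : Fin 4}
    (hu : DifferentiableAt ℝ (pd 4 u i) (proj45 z))
    (hv : DifferentiableAt ℝ (pd 4 v i) (proj45 z))
    (hw : DifferentiableAt ℝ (pd 4 w i) (proj45 z)) (y : Fin 5 → ℝ) :
    fderiv ℝ (laxField u v w i) z y =
      y 4 • e 5 i.castSucc - fderiv ℝ (pd 4 u i) (proj45 z) (proj45 y) • e 5 2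
      - fderiv ℝ (pd 4 v i) (proj45 z) (proj45 y) • e 5 3
      + (z 4 * fderiv ℝ (pd 4 w i) (proj45 z) (proj45 y) + pd 4 w i (proj45 z) * y 4) • e 5 4 := by
  let π₄ := ContinuousLinearMap.proj (R := ℝ) (φ := fun _ : Fin 5 => ℝ) 4
  have hπ₄ : HasFDerivAt (fun z : Fin 5 → ℝ => z 4) π₄ z := π₄.hasFDerivAt
  have hcomp {g : (Fin 4 → ℝ) → ℝ} (hg : DifferentiableAt ℝ g (proj45 z)) :
      HasFDerivAt (fun z => g (proj45 z)) ((fderiv ℝ g (proj45 z)).comp proj45CLM) z :=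
    hg.hasFDerivAt.comp z proj45CLM.hasFDerivAt
  have h : HasFDerivAt (laxField u v w i) _ z :=
    (((hπ₄.smul_const (e 5 i.castSucc)).sub ((hcomp hu).smul_const (e 5 2))).sub
      ((hcomp hv).smul_const (e 5 3))).add ((hπ₄.mul (hcomp hw)).smul_const (e 5 4))
  rw [h.fderiv]
  simp [proj45CLM_apply, π₄]

noncomputable def laxRemainder (u v w : (Fin 4 → ℝ) → ℝ) (z : Fin 5 → ℝ) : Fin 5 → ℝ :=
  let x := proj45 z
  (R1op u v u x - (pd 4 u 0 x * pd 4 w 1 x - pd 4 u 1 x * pd 4 w 0 x)) • e 5 2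
  + (R1op u v v x - (pd 4 v 0 x * pd 4 w 1 x - pd 4 v 1 x * pd 4 w 0 x)) • e 5 3
  - (z 4 * R1op u v w x) • e 5 4

theorem vbr_YF1_YF2 (hu : ContDiffAt ℝ 2 u (proj45 z))
    (hv : ContDiffAt ℝ 2 v (proj45 z)) (hw : ContDiffAt ℝ 2 w (proj45 z)) :
    vbr 5 (YF1 u v w) (YF2 u v w) z =
      (-pd 4 w 1 (proj45 z)) • YF1 u v w z + pd 4 w 0 (proj45 z) • YF2 u v w z
      + laxRemainder u v w z := by
  rw [vbr, YF1_eq_laxField, YF2_eq_laxField,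
    fderiv_laxField_apply (differentiableAt_pd hu 1) (differentiableAt_pd hv 1)
      (differentiableAt_pd hw 1),
    fderiv_laxField_apply (differentiableAt_pd hu 0) (differentiableAt_pd hv 0)
      (differentiableAt_pd hw 0),
    proj45_laxField, proj45_laxField, laxField_apply_four, laxField_apply_four]
  simp only [map_sub, map_smul, fderiv_pd_apply_e, smul_eq_mul, laxField, laxRemainder, R1op]
  rw [pd2_comm hu 0 1, pd2_comm hv 0 1, pd2_comm hw 0 1]
  module

def SelfDualityEqs (u v w : (Fin 4 → ℝ) → ℝ) (x : Fin 4 → ℝ) : Prop :=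
  R1op u v u x = pd 4 u 0 x * pd 4 w 1 x - pd 4 u 1 x * pd 4 w 0 x
  ∧ R1op u v v x = pd 4 v 0 x * pd 4 w 1 x - pd 4 v 1 x * pd 4 w 0 x
  ∧ R1op u v w x = 0

theorem laxRemainder_eq_zero_iff (hlam : z 4 ≠ 0) :
    laxRemainder u v w z = 0 ↔ SelfDualityEqs u v w (proj45 z) := by
  constructor
  · intro h
    refine ⟨sub_eq_zero.mp ?_, sub_eq_zero.mp ?_, ?_⟩
    · simpa [laxRemainder, e] using congrFun h 2
    · simpa [laxRemainder, e] using congrFun h 3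
    · simpa [laxRemainder, e, hlam] using congrFun h 4
  · rintro ⟨hu, hv, hw⟩
    simp [laxRemainder, hu, hv, hw]

theorem vbr_YF1_YF2_mem_span_iff (hu : ContDiffAt ℝ 2 u (proj45 z))
    (hv : ContDiffAt ℝ 2 v (proj45 z)) (hw : ContDiffAt ℝ 2 w (proj45 z)) (hlam : z 4 ≠ 0) :
    vbr 5 (YF1 u v w) (YF2 u v w) z ∈ Submodule.span ℝ {YF1 u v w z, YF2 u v w z} ↔
      SelfDualityEqs u v w (proj45 z) := by
  rw [vbr_YF1_YF2 hu hv hw, ← laxRemainder_eq_zero_iff hlam,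
    Submodule.add_mem_iff_right _ (Submodule.mem_span_pair.mpr ⟨_, _, rfl⟩)]
  refine ⟨fun h => eq_zero_of_mem_span_pair (i := 0) (j := 1) ?_ ?_ ?_ ?_ h ?_ ?_,
    fun h => h ▸ zero_mem _⟩ <;> simp [YF1, YF2, laxRemainder, e, hlam]

end LaxPair

/-- Construction 2 (4D): `[Y₁,Y₂](x,λ) ∈ span{Y₁(x,λ), Y₂(x,λ)}` for all `x ∈ Ω`,
`λ ≠ 0`, iff `R₁(u) = u₁w₂ − u₂w₁`, `R₁(v) = v₁w₂ − v₂w₁`, `R₁(w) = 0` on `Ω`. -/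
theorem stmt_10 (Ω : Set (Fin 4 → ℝ)) (hΩ : IsOpen Ω)
    (u v w : (Fin 4 → ℝ) → ℝ)
    (hu : ContDiffOn ℝ (⊤:ℕ∞) u Ω) (hv : ContDiffOn ℝ (⊤:ℕ∞) v Ω)
    (hw : ContDiffOn ℝ (⊤:ℕ∞) w Ω) :
    (∀ z : Fin 5 → ℝ, proj45 z ∈ Ω → z 4 ≠ 0 →
        vbr 5 (YF1 u v w) (YF2 u v w) z ∈
          Submodule.span ℝ ({YF1 u v w z, YF2 u v w z} : Set (Fin 5 → ℝ))) ↔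
      (∀ x ∈ Ω,
        R1op u v u x = pd 4 u 0 x * pd 4 w 1 x - pd 4 u 1 x * pd 4 w 0 x
        ∧ R1op u v v x = pd 4 v 0 x * pd 4 w 1 x - pd 4 v 1 x * pd 4 w 0 x
        ∧ R1op u v w x = 0) := by
  have smooth {f : (Fin 4 → ℝ) → ℝ} (hf : ContDiffOn ℝ (⊤:ℕ∞) f Ω) {x} (hx : x ∈ Ω) :
      ContDiffAt ℝ 2 f x :=
    (hf.contDiffAt (hΩ.mem_nhds hx)).of_le (WithTop.coe_le_coe.mpr le_top)
  have key {z : Fin 5 → ℝ} (hz : proj45 z ∈ Ω) :=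
    vbr_YF1_YF2_mem_span_iff (smooth hu hz) (smooth hv hz) (smooth hw hz)
  refine ⟨fun H x hx => ?_, fun H z hz hlam => (key hz hlam).mpr (H _ hz)⟩
  obtain ⟨z, hz, hlam⟩ : ∃ z : Fin 5 → ℝ, proj45 z = x ∧ z 4 ≠ 0 :=
    ⟨Fin.snoc x 1, proj45_snoc x 1, by
      rw [show (4 : Fin 5) = Fin.last 4 from rfl, Fin.snoc_last]; exact one_ne_zero⟩
  rw [← hz] at hx ⊢
  exact (key hx hlam).mp (H z hx hlam)
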